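/- arXiv:2310.17296 — 2 statements merged into one kernel-verified Lean document; each statement's English description precedes it below -/
import Mathlib

section
/- Let (π,T,S) be a covariant representation of L on L^p_ν(Ω). Then the smallest closed (unital) subalgebra of B(L^p_ν(Ω)) containing {π(a) : a ∈ C(X)} ∪ {T, S} coincides with the smallest closed subalgebra containing {T_i, S_i : i = 1,…,n}. In particular every π(a), a ∈ C(X), lies in the closed subalgebra generated by the T_i and S_i, and T = π(ϱ^{1/p}) Σ_{i=1}^n T_i and S = Σ_{i=1}^n S_i π(ϱ^{1/q}) lie in it as well. -/
open MeasureTheory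
open scoped ENNReal

noncomputable section

/-- The Bernoulli shift space `X = {1,…,n}^ℕ`, modelled as `ℕ → Fin n`. -/
abbrev BSpace (n : ℕ) := ℕ → Fin n

/-- The shift map `φ(x₁,x₂,x₃,…) = (x₂,x₃,…)`. -/
def shift (n : ℕ) (x : BSpace n) : BSpace n := fun k => x (k + 1)

lemma shift_continuous (n : ℕ) : Continuous (shift n) :=
  continuous_pi fun k => continuous_apply (k + 1)

/-- The shift map as a continuous map. -/
def shiftCM (n : ℕ) : C(BSpace n, BSpace n) := ⟨shift n, shift_continuous n⟩

/-- The preimage section `iy = (i, y₁, y₂, …)` of the shift. -/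
def cons (n : ℕ) (i : Fin n) (x : BSpace n) : BSpace n :=
  fun k => Nat.casesOn k i fun m => x m

lemma cons_continuous (n : ℕ) (i : Fin n) : Continuous (cons n i) := by
  apply continuous_pi
  intro k
  cases k with
  | zero => exact continuous_const
  | succ m => exact continuous_apply m

/-- The transfer (Ruelle–Perron–Frobenius) operator
`L(a)(y) = Σ_{x ∈ φ⁻¹(y)} ϱ(x) a(x) = Σ_{i=1}^n ϱ(iy) a(iy)`. -/
def transfer (n : ℕ) (ϱ : C(BSpace n, ℝ)) (a : C(BSpace n, ℂ)) : C(BSpace n, ℂ) :=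
  ⟨fun y => ∑ i : Fin n, (ϱ (cons n i y) : ℂ) * a (cons n i y), by
    refine continuous_finset_sum _ fun i _ => ?_
    exact (Complex.continuous_ofReal.comp (ϱ.continuous.comp (cons_continuous n i))).mul
      (a.continuous.comp (cons_continuous n i))⟩

lemma isClopen_cyl (n : ℕ) (i : Fin n) : IsClopen {x : BSpace n | x 0 = i} :=
  (isClopen_discrete ({i} : Set (Fin n))).preimage (continuous_apply 0)

/-- The power `ϱ^r` of the (strictly positive) potential, as a continuous map. -/
def rhoPow (n : ℕ) (ϱ : C(BSpace n, ℝ)) (hϱ : ∀ x, 0 < ϱ x) (r : ℝ) : C(BSpace n, ℝ) :=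
  ⟨fun x => ϱ x ^ r, ϱ.continuous.rpow_const fun x => Or.inl (hϱ x).ne'⟩

/-- The complex-valued power `ϱ^r` of the potential, as a continuous map. -/
def rhoPowC (n : ℕ) (ϱ : C(BSpace n, ℝ)) (hϱ : ∀ x, 0 < ϱ x) (r : ℝ) : C(BSpace n, ℂ) :=
  ⟨fun x => ((ϱ x ^ r : ℝ) : ℂ), Complex.continuous_ofReal.comp (rhoPow n ϱ hϱ r).continuous⟩

/-- The continuous function `g·1_{X_i}` (product of `g` with the indicator of the clopen
cylinder `X_i = {x : x₁ = i}`), as a complex-valued continuous map. -/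
def wInd (n : ℕ) (i : Fin n) (g : C(BSpace n, ℝ)) : C(BSpace n, ℂ) :=
  ⟨fun x => if x 0 = i then (g x : ℂ) else 0, by
    refine Continuous.if (fun x hx => ?_)
      (Complex.continuous_ofReal.comp g.continuous) continuous_const
    rw [(isClopen_cyl n i).frontier_eq] at hx
    exact absurd hx (Set.notMem_empty x)⟩

/-- The operator `T_i = π(ϱ^{-1/p}·1_{X_i}) T`. -/
def TOp {A : Type*} [Mul A] (n : ℕ) (ϱ : C(BSpace n, ℝ)) (hϱ : ∀ x, 0 < ϱ x) (p : ℝ≥0∞)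
    (π : C(BSpace n, ℂ) → A) (T : A) (i : Fin n) : A :=
  π (wInd n i (rhoPow n ϱ hϱ (-(1 / p.toReal)))) * T

/-- The operator `S_i = S π(ϱ^{-1/q}·1_{X_i})`, where `1/q = 1 - 1/p`
(with the convention `ϱ^{-1/q} = ϱ^0 = 1` when `p = 1`). -/
def SOp {A : Type*} [Mul A] (n : ℕ) (ϱ : C(BSpace n, ℝ)) (hϱ : ∀ x, 0 < ϱ x) (p : ℝ≥0∞)
    (π : C(BSpace n, ℂ) → A) (S : A) (i : Fin n) : A :=
  S * π (wInd n i (rhoPow n ϱ hϱ (-(1 - 1 / p.toReal))))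

/-- The indicator of the cylinder set `X_{i₁…i_N} = {x : x₁ = i₁, …, x_N = i_N}`
determined by the word `w = (i₁,…,i_N)`, as a continuous map. -/
def cylCM (n N : ℕ) (w : Fin N → Fin n) : C(BSpace n, ℂ) :=
  ⟨fun x => if (fun k : Fin N => x k) = w then 1 else 0, by
    have hclopen : IsClopen {x : BSpace n | (fun k : Fin N => x k) = w} :=
      (isClopen_discrete ({w} : Set (Fin N → Fin n))).preimage
        (continuous_pi fun k => continuous_apply (k : ℕ))
    refine Continuous.if (fun x hx => ?_) continuous_const continuous_const
    rw [hclopen.frontier_eq] at hx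
    exact absurd hx (Set.notMem_empty x)⟩


/-!
Covariance `T π(a) = π(a ∘ φ) T` together with `Σ T_i S_i = 1` gives
`π(1_{X_j} · (b ∘ φ)) = T_j π(b) S_j`, because `1_{X_j} · (b ∘ φ) · 1_{X_i}` vanishes for
`i ≠ j`; so by induction on the length of the word every cylinder indicator
`π(1_{X_{i₁…i_N}})` is a product of the `T_i` and `S_i`. Cylinder indicators generate a dense
subalgebra of `C(X)` (Stone–Weierstrass) and `π` is contractive, hence `π(C(X))` lies in the
closed algebra generated by the `T_i`, `S_i`. Finally `T` and `S` are recovered from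
`Σ T_i = π(ϱ^{-1/p}) T` and `Σ S_i = S π(ϱ^{-1/q})`.
-/

open Algebra

theorem Subalgebra.topologicalClosure_adjoin_eq_of_subset {R A : Type*} [CommSemiring R]
    [Semiring A] [Algebra R A] [TopologicalSpace A] [IsSemitopologicalSemiring A]
    {s t : Set A} (hs : s ⊆ (adjoin R t).topologicalClosure) (ht : t ⊆ adjoin R s) :
    (adjoin R s).topologicalClosure = (adjoin R t).topologicalClosure :=
  le_antisymm (topologicalClosure_minimal (adjoin_le hs) (isClosed_topologicalClosure _))
    (topologicalClosure_mono (adjoin_le ht))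

section BernoulliFunctions

variable (n : ℕ)

lemma wInd_apply (i : Fin n) (g : C(BSpace n, ℝ)) (x : BSpace n) :
    wInd n i g x = if x 0 = i then (g x : ℂ) else 0 := rfl

lemma sum_wInd_rhoPow (ϱ : C(BSpace n, ℝ)) (hϱ : ∀ x, 0 < ϱ x) (r : ℝ) :
    ∑ i : Fin n, wInd n i (rhoPow n ϱ hϱ r) = rhoPowC n ϱ hϱ r := by
  ext x
  simp [wInd_apply, rhoPowC, rhoPow, ContinuousMap.sum_apply]

lemma rhoPowC_mul_rhoPowC_neg (ϱ : C(BSpace n, ℝ)) (hϱ : ∀ x, 0 < ϱ x) (r : ℝ) :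
    rhoPowC n ϱ hϱ r * rhoPowC n ϱ hϱ (-r) = 1 := by
  ext x
  simp only [ContinuousMap.mul_apply, rhoPowC, ContinuousMap.coe_mk, ContinuousMap.one_apply]
  rw [← Complex.ofReal_mul, ← Real.rpow_add (hϱ x), add_neg_cancel, Real.rpow_zero,
    Complex.ofReal_one]

lemma wInd_one_mul_comp_shift_mul_wInd (j i : Fin n) (b : C(BSpace n, ℂ))
    (g : C(BSpace n, ℝ)) :
    wInd n j 1 * b.comp (shiftCM n) * wInd n i g
      = if i = j then wInd n i g * b.comp (shiftCM n) else 0 := by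
  ext x
  by_cases hij : i = j
  · subst hij
    by_cases hx : x 0 = i <;> simp [wInd_apply, hx, mul_comm]
  · by_cases hx : x 0 = i <;> simp [wInd_apply, hx, hij]

lemma cylCM_zero (w : Fin 0 → Fin n) : cylCM n 0 w = 1 := by
  ext x
  simp only [cylCM, ContinuousMap.coe_mk, ContinuousMap.one_apply]
  exact if_pos (Subsingleton.elim _ w)

lemma cylCM_succ (N : ℕ) (w : Fin (N + 1) → Fin n) :
    cylCM n (N + 1) w = wInd n (w 0) 1 * (cylCM n N (w ∘ Fin.succ)).comp (shiftCM n) := by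
  ext x
  have hword : (fun k : Fin (N + 1) => x k) = w ↔
      x 0 = w 0 ∧ (fun k : Fin N => shift n x k) = w ∘ Fin.succ := by
    refine ⟨fun h => ⟨congrFun h 0, funext fun k => congrFun h k.succ⟩,
      fun ⟨h0, h1⟩ => ?_⟩
    funext k
    exact Fin.cases h0 (fun m => congrFun h1 m) k
  simp only [cylCM, wInd_apply, ContinuousMap.mul_apply, ContinuousMap.comp_apply,
    ContinuousMap.coe_mk, shiftCM, ContinuousMap.one_apply, hword]
  by_cases h0 : x 0 = w 0 <;> simp [h0]

lemma star_cylCM (N : ℕ) (w : Fin N → Fin n) : star (cylCM n N w) = cylCM n N w := by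
  ext x
  simp only [ContinuousMap.star_apply, cylCM, ContinuousMap.coe_mk]
  split_ifs <;> simp

lemma exists_cylCM_apply_ne {x y : BSpace n} (hxy : x ≠ y) :
    ∃ N w, cylCM n N w x ≠ cylCM n N w y := by
  obtain ⟨k, hk⟩ := Function.ne_iff.mp hxy
  refine ⟨k + 1, fun j : Fin (k + 1) => x j, ?_⟩
  have hy : ¬(fun j : Fin (k + 1) => y j) = fun j : Fin (k + 1) => x j :=
    fun h => hk (congrFun h (Fin.last k)).symm
  simp [cylCM, hy]

lemma dense_adjoin_cylCM :
    Dense (adjoin ℂ {f | ∃ N w, f = cylCM n N w} : Set C(BSpace n, ℂ)) := by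
  set s : Set C(BSpace n, ℂ) := {f | ∃ N w, f = cylCM n N w}
  have hstar : star s ⊆ s := by
    rintro f ⟨N, w, hw⟩
    exact ⟨N, w, by rw [← star_star f, hw, star_cylCM]⟩
  have hsep : (StarAlgebra.adjoin ℂ s).SeparatesPoints := fun x y hxy => by
    obtain ⟨N, w, hw⟩ := exists_cylCM_apply_ne n hxy
    exact ⟨_, ⟨cylCM n N w, StarAlgebra.subset_adjoin ℂ s ⟨N, w, rfl⟩, rfl⟩, hw⟩
  have hcoe : (StarAlgebra.adjoin ℂ s : Set C(BSpace n, ℂ)) = adjoin ℂ s := by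
    rw [← StarSubalgebra.coe_toSubalgebra, StarAlgebra.adjoin_toSubalgebra,
      Set.union_eq_left.mpr hstar]
  rw [dense_iff_closure_eq, ← hcoe, ← StarSubalgebra.topologicalClosure_coe,
    ContinuousMap.starSubalgebra_topologicalClosure_eq_top_of_separatesPoints _ hsep]
  rfl

end BernoulliFunctions

section CovariantRepresentation

variable {n : ℕ} {ϱ : C(BSpace n, ℝ)} {hϱ : ∀ x, 0 < ϱ x} {p : ℝ≥0∞}
  {A : Type*} [Ring A] [Algebra ℂ A] (π : C(BSpace n, ℂ) →ₐ[ℂ] A) {T S : A}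

lemma eq_map_rhoPowC_mul_sum_TOp :
    T = π (rhoPowC n ϱ hϱ (1 / p.toReal)) * ∑ i, TOp n ϱ hϱ p π T i := by
  simp only [TOp]
  rw [← Finset.sum_mul, ← map_sum, sum_wInd_rhoPow, ← mul_assoc, ← map_mul,
    rhoPowC_mul_rhoPowC_neg, map_one, one_mul]

lemma eq_sum_SOp_mul_map_rhoPowC :
    S = (∑ i, SOp n ϱ hϱ p π S i) * π (rhoPowC n ϱ hϱ (1 - 1 / p.toReal)) := by
  simp only [SOp]
  rw [← Finset.mul_sum, ← map_sum, sum_wInd_rhoPow, mul_assoc, ← map_mul, mul_comm,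
    rhoPowC_mul_rhoPowC_neg, map_one, mul_one]

lemma map_wInd_one_mul_comp_shift
    (hcov : ∀ a, T * π a = π (a.comp (shiftCM n)) * T)
    (hsum : ∑ i, TOp n ϱ hϱ p π T i * SOp n ϱ hϱ p π S i = 1)
    (j : Fin n) (b : C(BSpace n, ℂ)) :
    π (wInd n j 1 * b.comp (shiftCM n))
      = TOp n ϱ hϱ p π T j * π b * SOp n ϱ hϱ p π S j := by
  have hmul : ∀ i, π (wInd n j 1 * b.comp (shiftCM n)) * TOp n ϱ hϱ p π T i
      = if i = j then TOp n ϱ hϱ p π T i * π b else 0 := by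
    intro i
    rw [TOp, ← mul_assoc, ← map_mul, wInd_one_mul_comp_shift_mul_wInd]
    split_ifs
    · rw [map_mul, mul_assoc, ← hcov, ← mul_assoc]
    · rw [map_zero, zero_mul]
  calc π (wInd n j 1 * b.comp (shiftCM n))
      = ∑ i, π (wInd n j 1 * b.comp (shiftCM n)) * TOp n ϱ hϱ p π T i
          * SOp n ϱ hϱ p π S i := by
        simp only [mul_assoc, ← Finset.mul_sum, hsum, mul_one]
    _ = TOp n ϱ hϱ p π T j * π b * SOp n ϱ hϱ p π S j := by
        simp only [hmul, ite_mul, zero_mul, Finset.sum_ite_eq', Finset.mem_univ, if_true]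

lemma map_cylCM_mem_adjoin
    (hcov : ∀ a, T * π a = π (a.comp (shiftCM n)) * T)
    (hsum : ∑ i, TOp n ϱ hϱ p π T i * SOp n ϱ hϱ p π S i = 1)
    (N : ℕ) (w : Fin N → Fin n) :
    π (cylCM n N w)
      ∈ adjoin ℂ (Set.range (TOp n ϱ hϱ p π T) ∪ Set.range (SOp n ϱ hϱ p π S)) := by
  induction N with
  | zero => simp [cylCM_zero]
  | succ N ih =>
    rw [cylCM_succ, map_wInd_one_mul_comp_shift π hcov hsum]
    exact mul_mem (mul_mem (subset_adjoin (Or.inl ⟨w 0, rfl⟩)) (ih _))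
      (subset_adjoin (Or.inr ⟨w 0, rfl⟩))

lemma map_mem_topologicalClosure_adjoin [TopologicalSpace A] [IsSemitopologicalSemiring A]
    (hπ : Continuous π)
    (hcov : ∀ a, T * π a = π (a.comp (shiftCM n)) * T)
    (hsum : ∑ i, TOp n ϱ hϱ p π T i * SOp n ϱ hϱ p π S i = 1) (a : C(BSpace n, ℂ)) :
    π a ∈ (adjoin ℂ (Set.range (TOp n ϱ hϱ p π T)
      ∪ Set.range (SOp n ϱ hϱ p π S))).topologicalClosure := by
  have hcyl : adjoin ℂ {f | ∃ N w, f = cylCM n N w}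
      ≤ (adjoin ℂ (Set.range (TOp n ϱ hϱ p π T)
          ∪ Set.range (SOp n ϱ hϱ p π S))).comap π :=
    adjoin_le (by rintro _ ⟨N, w, rfl⟩; exact map_cylCM_mem_adjoin π hcov hsum N w)
  exact map_mem_closure hπ (dense_adjoin_cylCM n a) fun f hf => hcyl hf

end CovariantRepresentation

theorem stmt_8_general (n : ℕ)
    (ϱ : C(BSpace n, ℝ)) (hϱpos : ∀ x, 0 < ϱ x)
    {Ω : Type*} [MeasurableSpace Ω] (ν : Measure Ω)
    (p : ℝ≥0∞) [Fact (1 ≤ p)]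
    (π : C(BSpace n, ℂ) →ₐ[ℂ] (Lp ℂ p ν →L[ℂ] Lp ℂ p ν))
    (T S : Lp ℂ p ν →L[ℂ] Lp ℂ p ν)
    (hπcontr : ∀ a : C(BSpace n, ℂ), ‖π a‖ ≤ ‖a‖)
    (hcov2 : ∀ a : C(BSpace n, ℂ), T * π a = π (a.comp (shiftCM n)) * T)
    (hsum : ∑ i : Fin n,
      TOp n ϱ hϱpos p (fun a => π a) T i * SOp n ϱ hϱpos p (fun a => π a) S i = 1)
    :
    (Algebra.adjoin ℂ (Set.range (fun a => π a) ∪ {T, S})).topologicalClosure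
      = (Algebra.adjoin ℂ (Set.range (TOp n ϱ hϱpos p (fun a => π a) T)
          ∪ Set.range (SOp n ϱ hϱpos p (fun a => π a) S))).topologicalClosure ∧
    (∀ a : C(BSpace n, ℂ),
      π a ∈ (Algebra.adjoin ℂ (Set.range (TOp n ϱ hϱpos p (fun a => π a) T)
        ∪ Set.range (SOp n ϱ hϱpos p (fun a => π a) S))).topologicalClosure) ∧
    T = π (rhoPowC n ϱ hϱpos (1 / p.toReal)) * ∑ i : Fin n, TOp n ϱ hϱpos p (fun a => π a) T i ∧
    S = (∑ i : Fin n, SOp n ϱ hϱpos p (fun a => π a) S i)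
          * π (rhoPowC n ϱ hϱpos (1 - 1 / p.toReal)) ∧
    T ∈ (Algebra.adjoin ℂ (Set.range (TOp n ϱ hϱpos p (fun a => π a) T)
        ∪ Set.range (SOp n ϱ hϱpos p (fun a => π a) S))).topologicalClosure ∧
    S ∈ (Algebra.adjoin ℂ (Set.range (TOp n ϱ hϱpos p (fun a => π a) T)
        ∪ Set.range (SOp n ϱ hϱpos p (fun a => π a) S))).topologicalClosure := by
  set B := adjoin ℂ (Set.range (TOp n ϱ hϱpos p π T) ∪ Set.range (SOp n ϱ hϱpos p π S))
  have hπB : ∀ a, π a ∈ B.topologicalClosure := map_mem_topologicalClosure_adjoin π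
    (AddMonoidHomClass.continuous_of_bound π 1 (by simpa using hπcontr)) hcov2 hsum
  have hT := eq_map_rhoPowC_mul_sum_TOp π (T := T) (hϱ := hϱpos) (p := p)
  have hS := eq_sum_SOp_mul_map_rhoPowC π (S := S) (hϱ := hϱpos) (p := p)
  have hTB : T ∈ B.topologicalClosure := hT ▸ mul_mem (hπB _)
    (B.le_topologicalClosure (sum_mem fun i _ => subset_adjoin (Or.inl ⟨i, rfl⟩)))
  have hSB : S ∈ B.topologicalClosure := hS ▸ mul_mem
    (B.le_topologicalClosure (sum_mem fun i _ => subset_adjoin (Or.inr ⟨i, rfl⟩))) (hπB _)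
  refine ⟨Subalgebra.topologicalClosure_adjoin_eq_of_subset ?_ ?_, hπB, hT, hS, hTB, hSB⟩
  · rintro _ (⟨a, rfl⟩ | rfl | rfl)
    exacts [hπB a, hTB, hSB]
  · rintro _ (⟨i, rfl⟩ | ⟨i, rfl⟩)
    · exact mul_mem (subset_adjoin (Or.inl ⟨_, rfl⟩)) (subset_adjoin (Or.inr (.inl rfl)))
    · exact mul_mem (subset_adjoin (Or.inr (.inr rfl))) (subset_adjoin (Or.inl ⟨_, rfl⟩))

/-- For a covariant representation `(π,T,S)` of `L` on `L^p_ν(Ω)`: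
the smallest closed (unital) subalgebra of `B(L^p_ν(Ω))` containing
`{π(a) : a ∈ C(X)} ∪ {T, S}` coincides with the smallest closed subalgebra containing
`{T_i, S_i : i = 1,…,n}`. In particular every `π(a)` lies in the latter, and
`T = π(ϱ^{1/p}) Σ_i T_i` and `S = Σ_i S_i π(ϱ^{1/q})` lie in it as well. -/
theorem stmt_8 (n : ℕ) (hn : 2 ≤ n)
    (ϱ : C(BSpace n, ℝ)) (hϱpos : ∀ x, 0 < ϱ x)
    (hϱsum : ∀ y : BSpace n, ∑ i : Fin n, ϱ (cons n i y) = 1)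
    {Ω : Type*} [MeasurableSpace Ω] (ν : Measure Ω)
    (p : ℝ≥0∞) [Fact (1 ≤ p)] (hp : p ≠ ∞)
    (π : C(BSpace n, ℂ) →ₐ[ℂ] (Lp ℂ p ν →L[ℂ] Lp ℂ p ν))
    (T S : Lp ℂ p ν →L[ℂ] Lp ℂ p ν)
    (hπcontr : ∀ a : C(BSpace n, ℂ), ‖π a‖ ≤ ‖a‖)
    (hT : ‖T‖ ≤ 1) (hS : ‖S‖ ≤ 1)
    (hcov1 : ∀ a : C(BSpace n, ℂ), S * π a * T = π (transfer n ϱ a))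
    (hcov2 : ∀ a : C(BSpace n, ℂ), T * π a = π (a.comp (shiftCM n)) * T)
    (hTi : ∀ i : Fin n, ‖TOp n ϱ hϱpos p (fun a => π a) T i‖ ≤ 1)
    (hSi : ∀ i : Fin n, ‖SOp n ϱ hϱpos p (fun a => π a) S i‖ ≤ 1)
    (hsum : ∑ i : Fin n,
      TOp n ϱ hϱpos p (fun a => π a) T i * SOp n ϱ hϱpos p (fun a => π a) S i = 1)
    :
    (Algebra.adjoin ℂ (Set.range (fun a => π a) ∪ {T, S})).topologicalClosure
      = (Algebra.adjoin ℂ (Set.range (TOp n ϱ hϱpos p (fun a => π a) T)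
          ∪ Set.range (SOp n ϱ hϱpos p (fun a => π a) S))).topologicalClosure ∧
    (∀ a : C(BSpace n, ℂ),
      π a ∈ (Algebra.adjoin ℂ (Set.range (TOp n ϱ hϱpos p (fun a => π a) T)
        ∪ Set.range (SOp n ϱ hϱpos p (fun a => π a) S))).topologicalClosure) ∧
    T = π (rhoPowC n ϱ hϱpos (1 / p.toReal)) * ∑ i : Fin n, TOp n ϱ hϱpos p (fun a => π a) T i ∧
    S = (∑ i : Fin n, SOp n ϱ hϱpos p (fun a => π a) S i)
          * π (rhoPowC n ϱ hϱpos (1 - 1 / p.toReal)) ∧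
    T ∈ (Algebra.adjoin ℂ (Set.range (TOp n ϱ hϱpos p (fun a => π a) T)
        ∪ Set.range (SOp n ϱ hϱpos p (fun a => π a) S))).topologicalClosure ∧
    S ∈ (Algebra.adjoin ℂ (Set.range (TOp n ϱ hϱpos p (fun a => π a) T)
        ∪ Set.range (SOp n ϱ hϱpos p (fun a => π a) S))).topologicalClosure :=
  stmt_8_general n ϱ hϱpos ν p π T S hπcontr hcov2 hsum
end
end

section
/- For every a ∈ C(X), the spectral radius of π(a)T_φ : f ↦ a·(f∘φ) acting on L^p_μ(X) and the spectral radius of π(|a|^p)T_φ : g ↦ |a|^p·(g∘φ) acting on L¹_μ(X) are related by r_{B(L^p_μ(X))}(π(a)T_φ)^p = r_{B(L¹_μ(X))}(π(|a|^p)T_φ). -/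
open MeasureTheory
open scoped ENNReal

noncomputable section

/-!
Since `L*μ = μ` and the weights `ϱ(iy)` sum to one, `∫ c ∘ φ dμ = ∫ L(c ∘ φ) dμ = ∫ c dμ`, so `μ` is
shift-invariant. Hence `(π(a)T_φ)^N` is the weighted composition operator `f ↦ a_N · (f ∘ φ^N)` with
`a_N = ∏_{k<N} a ∘ φ^k`, and `(π(|a|^p)T_φ)^N` the one with weight `|a_N|^p`. If `|g| = |f|^p` then
`‖g‖₁ = ‖f‖_p^p` and `|(π(|a|^p)T_φ)^N g| = |(π(a)T_φ)^N f|^p`; as every `f ∈ Lᵖ` and every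
`g ∈ L¹` has such a partner, `‖(π(a)T_φ)^N‖^p = ‖(π(|a|^p)T_φ)^N‖` for all `N`, and Gelfand's
formula gives the claim.
-/

open BoundedContinuousFunction

lemma measurePreserving_of_forall_integral_comp_eq {X : Type*} [TopologicalSpace X]
    [MeasurableSpace X] [BorelSpace X] [HasOuterApproxClosed X] {μ : Measure X}
    [IsFiniteMeasure μ] {φ : X → X} (hφ : Continuous φ)
    (h : ∀ f : X →ᵇ ℝ, ∫ x, f (φ x) ∂μ = ∫ x, f x ∂μ) : MeasurePreserving φ μ μ := by
  refine ⟨hφ.measurable, ext_of_forall_integral_eq_of_IsFiniteMeasure fun f => ?_⟩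
  rw [integral_map hφ.aemeasurable f.continuous.aestronglyMeasurable, h]

section Shift

variable {n : ℕ}

lemma shift_cons (i : Fin n) (y : BSpace n) : shift n (cons n i y) = y := rfl

lemma transfer_comp_shift {ϱ : C(BSpace n, ℝ)} (hϱsum : ∀ y, ∑ i : Fin n, ϱ (cons n i y) = 1)
    (c : C(BSpace n, ℂ)) : transfer n ϱ (c.comp (shiftCM n)) = c := by
  ext y
  simp only [transfer, shiftCM, ContinuousMap.coe_mk, ContinuousMap.comp_apply, shift_cons,
    ← Finset.sum_mul, ← Complex.ofReal_sum, hϱsum y, Complex.ofReal_one, one_mul]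

lemma measurePreserving_shift {ϱ : C(BSpace n, ℝ)}
    (hϱsum : ∀ y, ∑ i : Fin n, ϱ (cons n i y) = 1) {μ : Measure (BSpace n)} [IsFiniteMeasure μ]
    (hμ : ∀ a : C(BSpace n, ℂ), ∫ y, transfer n ϱ a y ∂μ = ∫ y, a y ∂μ) :
    MeasurePreserving (shift n) μ μ := by
  refine measurePreserving_of_forall_integral_comp_eq (shift_continuous n) fun f => ?_
  have h := hμ ((ContinuousMap.mk ((↑) : ℝ → ℂ) Complex.continuous_ofReal).comp
    (f.toContinuousMap.comp (shiftCM n)))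
  rw [← ContinuousMap.comp_assoc, transfer_comp_shift hϱsum] at h
  simp only [ContinuousMap.comp_apply, ContinuousMap.coe_mk, shiftCM,
    BoundedContinuousFunction.coe_toContinuousMap] at h
  exact_mod_cast h.symm

end Shift

namespace MeasureTheory.Lp

variable {α E 𝕜 : Type*} [MeasurableSpace α] {μ : Measure α} [NormedAddCommGroup E] [RCLike 𝕜]
  {p : ℝ≥0∞}

lemma norm_eq_norm_rpow_of_ae {F : Type*} [NormedAddCommGroup F] (hp0 : p ≠ 0) (hp : p ≠ ∞)
    {f : Lp E p μ} {g : Lp F 1 μ} (h : ∀ᵐ x ∂μ, ‖g x‖ = ‖f x‖ ^ p.toReal) :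
    ‖g‖ = ‖f‖ ^ p.toReal := by
  have hpR : 0 < p.toReal := ENNReal.toReal_pos hp0 hp
  have hg : eLpNorm g 1 μ = eLpNorm (fun x => ‖f x‖ ^ p.toReal) 1 μ :=
    eLpNorm_congr_norm_ae (h.mono fun x hx => by
      rw [hx, Real.norm_of_nonneg (by positivity)])
  rw [Lp.norm_def, Lp.norm_def, ENNReal.toReal_rpow, hg, eLpNorm_norm_rpow _ hpR, one_mul,
    ENNReal.ofReal_toReal hp]

lemma exists_norm_eq_norm_rpow (hp0 : p ≠ 0) (hp : p ≠ ∞) (f : Lp E p μ) :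
    ∃ g : Lp 𝕜 1 μ, ∀ᵐ x ∂μ, ‖g x‖ = ‖f x‖ ^ p.toReal := by
  have hg := ((Lp.memLp f).norm_rpow hp0 hp).ofReal (K := 𝕜)
  refine ⟨hg.toLp _, hg.coeFn_toLp.mono fun x hx => ?_⟩
  rw [hx, RCLike.norm_ofReal, abs_of_nonneg (by positivity)]

lemma exists_norm_rpow_eq_norm (hp0 : p ≠ 0) (hp : p ≠ ∞) (g : Lp E 1 μ) :
    ∃ f : Lp 𝕜 p μ, ∀ᵐ x ∂μ, ‖g x‖ = ‖f x‖ ^ p.toReal := by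
  have hf := ((Lp.memLp g).norm_rpow_div p⁻¹).ofReal (K := 𝕜)
  rw [one_div, inv_inv] at hf
  refine ⟨hf.toLp _, hf.coeFn_toLp.mono fun x hx => ?_⟩
  rw [hx, RCLike.norm_ofReal, abs_of_nonneg (by positivity), ENNReal.toReal_inv,
    Real.rpow_inv_rpow (norm_nonneg _) (ENNReal.toReal_pos hp0 hp).ne']

end MeasureTheory.Lp

section WeightedComposition

variable {α 𝕜 : Type*} [MeasurableSpace α] {μ : Measure α} [RCLike 𝕜] {p : ℝ≥0∞} [Fact (1 ≤ p)]
  {W : α → 𝕜} {ψ : α → α}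

def IsWeightedCompOp (W : α → 𝕜) (ψ : α → α) (T : Lp 𝕜 p μ →L[𝕜] Lp 𝕜 p μ) : Prop :=
  ∀ f : Lp 𝕜 p μ, (T f : α → 𝕜) =ᵐ[μ] fun x => W x * f (ψ x)

lemma IsWeightedCompOp.pow {T : Lp 𝕜 p μ →L[𝕜] Lp 𝕜 p μ}
    (hT : IsWeightedCompOp W ψ T) (hψ : Measure.QuasiMeasurePreserving ψ μ μ) (N : ℕ) :
    IsWeightedCompOp (fun x => ∏ k ∈ Finset.range N, W (ψ^[k] x)) ψ^[N] (T ^ N) := by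
  induction N with
  | zero => intro f; simp
  | succ N ih =>
    intro f
    rw [pow_succ, mul_apply_eq_comp]
    filter_upwards [ih (T f), (hψ.iterate N).ae_eq (hT f)] with x hx hTf
    simp only [Function.comp_apply] at hTf
    rw [hx, hTf, Finset.prod_range_succ, Function.iterate_succ_apply']
    ring

lemma norm_apply_eq_norm_apply_rpow_of_isWeightedCompOp (hp : p ≠ ∞)
    (hψ : Measure.QuasiMeasurePreserving ψ μ μ)
    {A : Lp 𝕜 p μ →L[𝕜] Lp 𝕜 p μ} (hA : IsWeightedCompOp W ψ A)
    {B : Lp 𝕜 1 μ →L[𝕜] Lp 𝕜 1 μ}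
    (hB : IsWeightedCompOp (fun x => ((‖W x‖ ^ p.toReal : ℝ) : 𝕜)) ψ B)
    {f : Lp 𝕜 p μ} {g : Lp 𝕜 1 μ} (hfg : ∀ᵐ x ∂μ, ‖g x‖ = ‖f x‖ ^ p.toReal) :
    ‖B g‖ = ‖A f‖ ^ p.toReal := by
  refine Lp.norm_eq_norm_rpow_of_ae (one_pos.trans_le Fact.out).ne' hp ?_
  filter_upwards [hA f, hB g, hψ.ae_eq hfg] with x hAf hBg hfgψ
  simp only [Function.comp_apply] at hfgψ
  rw [hAf, hBg, norm_mul, norm_mul, hfgψ, RCLike.norm_ofReal, abs_of_nonneg (by positivity),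
    Real.mul_rpow (norm_nonneg _) (norm_nonneg _)]

lemma opNorm_rpow_eq_of_isWeightedCompOp (hp : p ≠ ∞)
    (hψ : Measure.QuasiMeasurePreserving ψ μ μ)
    {A : Lp 𝕜 p μ →L[𝕜] Lp 𝕜 p μ} (hA : IsWeightedCompOp W ψ A)
    {B : Lp 𝕜 1 μ →L[𝕜] Lp 𝕜 1 μ}
    (hB : IsWeightedCompOp (fun x => ((‖W x‖ ^ p.toReal : ℝ) : 𝕜)) ψ B) :
    ‖A‖ ^ p.toReal = ‖B‖ := by
  have hp0 : p ≠ 0 := (one_pos.trans_le Fact.out).ne'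
  have hpR : 0 < p.toReal := ENNReal.toReal_pos hp0 hp
  have hA_le : ‖A‖ ≤ ‖B‖ ^ p.toReal⁻¹ := by
    refine A.opNorm_le_bound (by positivity) fun f => ?_
    obtain ⟨g, hfg⟩ := Lp.exists_norm_eq_norm_rpow (𝕜 := 𝕜) hp0 hp f
    have key : ‖A f‖ ^ p.toReal ≤ ‖B‖ * ‖f‖ ^ p.toReal := by
      rw [← norm_apply_eq_norm_apply_rpow_of_isWeightedCompOp hp hψ hA hB hfg,
        ← Lp.norm_eq_norm_rpow_of_ae hp0 hp hfg]
      exact B.le_opNorm g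
    calc ‖A f‖ = (‖A f‖ ^ p.toReal) ^ p.toReal⁻¹ :=
          (Real.rpow_rpow_inv (norm_nonneg _) hpR.ne').symm
      _ ≤ (‖B‖ * ‖f‖ ^ p.toReal) ^ p.toReal⁻¹ := by gcongr
      _ = ‖B‖ ^ p.toReal⁻¹ * ‖f‖ := by
        rw [Real.mul_rpow (norm_nonneg _) (by positivity),
          Real.rpow_rpow_inv (norm_nonneg _) hpR.ne']
  have hB_le : ‖B‖ ≤ ‖A‖ ^ p.toReal := by
    refine B.opNorm_le_bound (by positivity) fun g => ?_
    obtain ⟨f, hfg⟩ := Lp.exists_norm_rpow_eq_norm (𝕜 := 𝕜) hp0 hp g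
    calc ‖B g‖ = ‖A f‖ ^ p.toReal :=
          norm_apply_eq_norm_apply_rpow_of_isWeightedCompOp hp hψ hA hB hfg
      _ ≤ (‖A‖ * ‖f‖) ^ p.toReal := by gcongr; exact A.le_opNorm f
      _ = ‖A‖ ^ p.toReal * ‖g‖ := by
        rw [Real.mul_rpow (norm_nonneg _) (norm_nonneg _), Lp.norm_eq_norm_rpow_of_ae hp0 hp hfg]
  refine le_antisymm ?_ hB_le
  calc ‖A‖ ^ p.toReal ≤ (‖B‖ ^ p.toReal⁻¹) ^ p.toReal := by gcongr
    _ = ‖B‖ := Real.rpow_inv_rpow (norm_nonneg _) hpR.ne'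

end WeightedComposition

lemma spectralRadius_rpow_eq_of_norm_pow_rpow_eq {A B : Type*} [NormedRing A]
    [NormedAlgebra ℂ A] [CompleteSpace A] [NormedRing B] [NormedAlgebra ℂ B] [CompleteSpace B]
    {a : A} {b : B}
    {r : ℝ} (hr : 0 ≤ r) (h : ∀ N : ℕ, ‖a ^ N‖ ^ r = ‖b ^ N‖) :
    spectralRadius ℂ a ^ r = spectralRadius ℂ b := by
  have hpow : ∀ N : ℕ,
      ((‖a ^ N‖₊ : ℝ≥0∞) ^ (1 / N : ℝ)) ^ r = (‖b ^ N‖₊ : ℝ≥0∞) ^ (1 / N : ℝ) := by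
    intro N
    have hN : (‖a ^ N‖₊ : ℝ≥0∞) ^ r = ‖b ^ N‖₊ := by
      rw [← ENNReal.coe_rpow_of_nonneg _ hr, ENNReal.coe_inj, ← NNReal.coe_inj,
        NNReal.coe_rpow, coe_nnnorm, coe_nnnorm, h]
    rw [← ENNReal.rpow_mul, mul_comm, ENNReal.rpow_mul, hN]
  refine tendsto_nhds_unique ?_ (spectrum.pow_nnnorm_pow_one_div_tendsto_nhds_spectralRadius b)
  simpa only [Function.comp_def, hpow] using
    ((ENNReal.continuous_rpow_const (y := r)).tendsto _).comp
      (spectrum.pow_nnnorm_pow_one_div_tendsto_nhds_spectralRadius a)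

theorem stmt_14_general (n : ℕ)
    (ϱ : C(BSpace n, ℝ))
    (hϱsum : ∀ y : BSpace n, ∑ i : Fin n, ϱ (cons n i y) = 1)
    (μ : Measure (BSpace n)) [IsProbabilityMeasure μ]
    (hμ : ∀ a : C(BSpace n, ℂ), ∫ y, transfer n ϱ a y ∂μ = ∫ y, a y ∂μ)
    (p : ℝ≥0∞) [Fact (1 ≤ p)] (hp : p ≠ ∞)
    (a : C(BSpace n, ℂ))
    (A : Lp ℂ p μ →L[ℂ] Lp ℂ p μ)
    (hA : ∀ f : Lp ℂ p μ, (A f : BSpace n → ℂ) =ᵐ[μ] fun x => a x * f (shift n x))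
    (B : Lp ℂ 1 μ →L[ℂ] Lp ℂ 1 μ)
    (hB : ∀ g : Lp ℂ 1 μ,
      (B g : BSpace n → ℂ) =ᵐ[μ] fun x => ((‖a x‖ ^ p.toReal : ℝ) : ℂ) * g (shift n x)) :
    spectralRadius ℂ A ^ p.toReal = spectralRadius ℂ B := by
  have hφ := (measurePreserving_shift hϱsum hμ).quasiMeasurePreserving
  refine spectralRadius_rpow_eq_of_norm_pow_rpow_eq ENNReal.toReal_nonneg fun N => ?_
  have hAN := IsWeightedCompOp.pow (W := a) hA hφ N
  have hBN := IsWeightedCompOp.pow (W := fun x => ((‖a x‖ ^ p.toReal : ℝ) : ℂ)) hB hφ N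
  have hweight : (fun x => ∏ k ∈ Finset.range N, ((‖a ((shift n)^[k] x)‖ ^ p.toReal : ℝ) : ℂ))
      = fun x => ((‖∏ k ∈ Finset.range N, a ((shift n)^[k] x)‖ ^ p.toReal : ℝ) : ℂ) := by
    funext x
    rw [norm_prod, ← Real.finsetProd_rpow _ _ fun _ _ => norm_nonneg _, Complex.ofReal_prod]
  rw [hweight] at hBN
  exact opNorm_rpow_eq_of_isWeightedCompOp hp (hφ.iterate N) hAN hBN

/-- For every `a ∈ C(X)`, the spectral radius of `π(a)T_φ : f ↦ a·(f∘φ)`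
on `L^p_μ(X)` and the spectral radius of `π(|a|^p)T_φ : g ↦ |a|^p·(g∘φ)` on `L¹_μ(X)` are
related by `r_{B(L^p)}(π(a)T_φ)^p = r_{B(L¹)}(π(|a|^p)T_φ)`. -/
theorem stmt_14 (n : ℕ) (hn : 2 ≤ n)
    (ϱ : C(BSpace n, ℝ)) (hϱpos : ∀ x, 0 < ϱ x)
    (hϱsum : ∀ y : BSpace n, ∑ i : Fin n, ϱ (cons n i y) = 1)
    (μ : Measure (BSpace n)) [IsProbabilityMeasure μ]
    (hμ : ∀ a : C(BSpace n, ℂ), ∫ y, transfer n ϱ a y ∂μ = ∫ y, a y ∂μ)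
    (p : ℝ≥0∞) [Fact (1 ≤ p)] (hp : p ≠ ∞)
    (a : C(BSpace n, ℂ))
    (A : Lp ℂ p μ →L[ℂ] Lp ℂ p μ)
    (hA : ∀ f : Lp ℂ p μ, (A f : BSpace n → ℂ) =ᵐ[μ] fun x => a x * f (shift n x))
    (B : Lp ℂ 1 μ →L[ℂ] Lp ℂ 1 μ)
    (hB : ∀ g : Lp ℂ 1 μ,
      (B g : BSpace n → ℂ) =ᵐ[μ] fun x => ((‖a x‖ ^ p.toReal : ℝ) : ℂ) * g (shift n x)) :
    spectralRadius ℂ A ^ p.toReal = spectralRadius ℂ B :=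
  stmt_14_general n ϱ hϱsum μ hμ p hp a A hA B hB

end
end
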